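/- arXiv:2505.23995 — 3 statements merged into one kernel-verified Lean document; each statement's English description precedes it below -/
import Mathlib

section
/- Let (S, A) be a partial affine plane of order n (n ≥ 2) with b = n² − a lines, where 1 ≤ a ≤ n − 1, and suppose no point has valency n + 1. Then there are at most n·a points of S of valency less than n. -/
/-!
The lines through a point `P` of a partial affine plane of order `n` meet pairwise only in `P`,
so they cut `n - 1` new points each out of the remaining `n² - 1`; hence every valency is at
most `n + 1`, and so at most `n` once `n + 1` is excluded. Counting incidences gives
`∑ valency = b·n = (n² - a)·n`, while every point of valency less than `n` falls at least one
short of the bound `n`, so the number `m` of such points satisfies `(n² - a)·n + m ≤ n²·n`,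
i.e. `m ≤ n·a`.
-/

open Finset

/-- The valency of a point `X`: the number of lines of `B` containing `X`. -/
def valency {α : Type*} [DecidableEq α] (B : Finset (Finset α)) (X : α) : ℕ :=
  (B.filter (fun L => X ∈ L)).card

section PartialAffinePlane

variable {α : Type*} [DecidableEq α] {S : Finset α} {A : Finset (Finset α)} {n : ℕ}

theorem sum_valency_eq_sum_card_inter (S : Finset α) (A : Finset (Finset α)) :
    ∑ P ∈ S, valency A P = ∑ L ∈ A, #(S ∩ L) := by
  simp_rw [valency, ← filter_mem_eq_inter, card_eq_sum_ones, sum_filter]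
  exact sum_comm

theorem sum_valency_eq_card_mul (hlines : ∀ L ∈ A, L ⊆ S ∧ L.card = n) :
    ∑ P ∈ S, valency A P = A.card * n := by
  rw [sum_valency_eq_sum_card_inter, card_eq_sum_ones, sum_mul, one_mul]
  refine sum_congr rfl fun L hL => ?_
  rw [inter_eq_right.mpr (hlines L hL).1, (hlines L hL).2]

theorem pairwiseDisjoint_erase_of_card_inter_le_one
    (hmeet : ∀ L ∈ A, ∀ M ∈ A, L ≠ M → (L ∩ M).card ≤ 1) (P : α) :
    (({L ∈ A | P ∈ L} : Finset _) : Set (Finset α)).PairwiseDisjoint (·.erase P) := by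
  intro L hL M hM hLM
  simp only [coe_filter, Set.mem_ofPred_eq] at hL hM
  refine disjoint_left.mpr fun x hxL hxM => ?_
  have hPx : 1 < (L ∩ M).card := one_lt_card.mpr
    ⟨P, mem_inter.mpr ⟨hL.2, hM.2⟩, x, mem_inter.mpr ⟨mem_of_mem_erase hxL, mem_of_mem_erase hxM⟩,
      (ne_of_mem_erase hxL).symm⟩
  exact absurd (hmeet L hL.1 M hM.1 hLM) hPx.not_ge

theorem valency_mul_pred_le (hlines : ∀ L ∈ A, L ⊆ S ∧ L.card = n)
    (hmeet : ∀ L ∈ A, ∀ M ∈ A, L ≠ M → (L ∩ M).card ≤ 1) {P : α} (hP : P ∈ S) :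
    valency A P * (n - 1) ≤ S.card - 1 := by
  have hcover : ({L ∈ A | P ∈ L} : Finset _).biUnion (·.erase P) ⊆ S.erase P := by
    intro x hx
    obtain ⟨L, hL, hxL⟩ := mem_biUnion.mp hx
    exact erase_subset_erase P (hlines L (mem_filter.mp hL).1).1 hxL
  calc valency A P * (n - 1)
      = ∑ L ∈ A with P ∈ L, (L.erase P).card := by
        rw [valency, ← smul_eq_mul, ← sum_const]
        refine sum_congr rfl fun L hL => ?_
        rw [card_erase_of_mem (mem_filter.mp hL).2, (hlines L (mem_filter.mp hL).1).2]
    _ = (({L ∈ A | P ∈ L} : Finset _).biUnion (·.erase P)).card :=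
        (card_biUnion (pairwiseDisjoint_erase_of_card_inter_le_one hmeet P)).symm
    _ ≤ S.card - 1 := (card_le_card hcover).trans_eq (card_erase_of_mem hP)

theorem valency_le_succ (hn : 2 ≤ n) (hS : S.card = n ^ 2)
    (hlines : ∀ L ∈ A, L ⊆ S ∧ L.card = n)
    (hmeet : ∀ L ∈ A, ∀ M ∈ A, L ≠ M → (L ∩ M).card ≤ 1) {P : α} (hP : P ∈ S) :
    valency A P ≤ n + 1 := by
  have h := valency_mul_pred_le hlines hmeet hP
  rw [hS, ← one_pow 2, Nat.sq_sub_sq] at h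
  exact Nat.le_of_mul_le_mul_right h (by omega)

end PartialAffinePlane

theorem Finset.sum_add_card_filter_lt_le {ι : Type*} {s : Finset ι} {f : ι → ℕ} {n : ℕ}
    (hf : ∀ x ∈ s, f x ≤ n) : ∑ x ∈ s, f x + #{x ∈ s | f x < n} ≤ #s * n := by
  rw [card_filter, ← sum_add_distrib, ← smul_eq_mul]
  refine sum_le_card_nsmul _ _ _ fun x hx => ?_
  have := hf x hx
  split_ifs <;> omega

theorem stmt_7_general {α : Type*} [DecidableEq α] (n a : ℕ) (hn : 2 ≤ n)
    (ha2 : a ≤ n - 1)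
    (S : Finset α) (A : Finset (Finset α))
    (hS : S.card = n ^ 2)
    (hlines : ∀ L ∈ A, L ⊆ S ∧ L.card = n)
    (hmeet : ∀ L ∈ A, ∀ M ∈ A, L ≠ M → (L ∩ M).card ≤ 1)
    (hb : A.card = n ^ 2 - a)
    (hnofull : ∀ P ∈ S, valency A P ≠ n + 1) :
    (S.filter (fun P => valency A P < n)).card ≤ n * a := by
  have hval : ∀ P ∈ S, valency A P ≤ n := fun P hP => by
    have := valency_le_succ hn hS hlines hmeet hP
    have := hnofull P hP
    omega
  have hcount := sum_add_card_filter_lt_le hval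
  rw [sum_valency_eq_card_mul hlines, hb, hS] at hcount
  have ha : a ≤ n ^ 2 := ha2.trans ((Nat.sub_le n 1).trans (Nat.le_self_pow two_ne_zero n))
  have hsplit : (n ^ 2 - a) * n + n * a = n ^ 2 * n := by
    rw [mul_comm n a, ← add_mul, Nat.sub_add_cancel ha]
  omega

/-- in a partial affine plane of order n with n² − a lines (1 ≤ a ≤ n − 1)
and no point of valency n + 1, there are at most n·a points of valency less than n. -/
theorem stmt_7 {α : Type*} [DecidableEq α] (n a : ℕ) (hn : 2 ≤ n)
    (ha1 : 1 ≤ a) (ha2 : a ≤ n - 1)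
    (S : Finset α) (A : Finset (Finset α))
    (hS : S.card = n ^ 2)
    (hlines : ∀ L ∈ A, L ⊆ S ∧ L.card = n)
    (hmeet : ∀ L ∈ A, ∀ M ∈ A, L ≠ M → (L ∩ M).card ≤ 1)
    (hb : A.card = n ^ 2 - a)
    (hnofull : ∀ P ∈ S, valency A P ≠ n + 1) :
    (S.filter (fun P => valency A P < n)).card ≤ n * a :=
  stmt_7_general n a hn ha2 S A hS hlines hmeet hb hnofull
end

section
/- Let n, d ≥ 2 and let (S, A) be a partial 3-(n^d + 1, n + 1, 1)-design such that for every point P the derived structure I_P can be uniquely completed to a full 2-(n^d, n, 1)-design I'_P. Suppose P is a point, ℓ is an added line of I'_P, and Q ∈ ℓ is a simple point of I'_P. Then for every point R ∈ ℓ with R ≠ Q, every point of ℓ \ {Q, R} is joined to Q by an added line in I'_R. -/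
open Finset

/-- The lines of the derived structure of `(S, A)` at the point `P`: for each circle `C` of
`A` through `P`, the set `C \ {P}`. -/
def derivedLines {α : Type*} [DecidableEq α] (A : Finset (Finset α)) (P : α) :
    Finset (Finset α) :=
  (A.filter (fun C => P ∈ C)).image (fun C => C.erase P)

/-- `B` is a completion of the derived structure of `(S, A)` at `P` to a full
2-(n^d, n, 1)-design on `S \ {P}`. -/
def IsDerivedCompletion {α : Type*} [DecidableEq α] (S : Finset α) (n : ℕ) (P : α)
    (A : Finset (Finset α)) (B : Finset (Finset α)) : Prop :=
  derivedLines A P ⊆ B ∧ (∀ L ∈ B, L ⊆ S.erase P ∧ L.card = n) ∧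
    ∀ X ∈ S.erase P, ∀ Y ∈ S.erase P, X ≠ Y → ∃! L, L ∈ B ∧ X ∈ L ∧ Y ∈ L

/-!
Let `m` be the line of `I'_R` through `Q` and `T`, and suppose it is the trace of a circle `C`.
If `P ∈ C`, then `C \ {P}` is a line of `I'_P` through `Q` and `T`, i.e. the added line `ℓ`,
which is absurd. Otherwise look at `I'_Q`. Every line of `I'_P` through `Q` other than `ℓ`
comes from a circle through `P` and `Q`, since `Q` is simple, so the line of `I'_Q` through
`P` and `R` can only contain `P` and points of `ℓ`. By counting it is `(ℓ \ {Q}) ∪ {P}`.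
The trace `C \ {Q}` also passes through `R` and `T`, so it is this line, which forces `P ∈ C`.
-/

section

variable {α : Type*} [DecidableEq α]

theorem mem_derivedLines {A : Finset (Finset α)} {P : α} {m : Finset α} :
    m ∈ derivedLines A P ↔ ∃ C ∈ A, P ∈ C ∧ C.erase P = m := by
  simp [derivedLines, and_assoc]

theorem erase_mem_derivedLines {A : Finset (Finset α)} {P : α} {C : Finset α} (hC : C ∈ A)
    (hPC : P ∈ C) : C.erase P ∈ derivedLines A P :=
  mem_derivedLines.2 ⟨C, hC, hPC, rfl⟩

namespace IsDerivedCompletion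

variable {S : Finset α} {n : ℕ} {P : α} {A B : Finset (Finset α)}

theorem subset_erase (hB : IsDerivedCompletion S n P A B) {L : Finset α} (hL : L ∈ B) :
    L ⊆ S.erase P :=
  (hB.2.1 L hL).1

theorem card_eq (hB : IsDerivedCompletion S n P A B) {L : Finset α} (hL : L ∈ B) :
    L.card = n :=
  (hB.2.1 L hL).2

theorem erase_mem (hB : IsDerivedCompletion S n P A B) {C : Finset α} (hC : C ∈ A)
    (hPC : P ∈ C) : C.erase P ∈ B :=
  hB.1 (erase_mem_derivedLines hC hPC)

theorem exists_mem_mem (hB : IsDerivedCompletion S n P A B) {X Y : α} (hX : X ∈ S.erase P)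
    (hY : Y ∈ S.erase P) (hXY : X ≠ Y) : ∃ L ∈ B, X ∈ L ∧ Y ∈ L :=
  let ⟨L, hL, _⟩ := hB.2.2 X hX Y hY hXY
  ⟨L, hL⟩

theorem eq_of_mem_of_mem (hB : IsDerivedCompletion S n P A B) {L M : Finset α} {X Y : α}
    (hL : L ∈ B) (hM : M ∈ B) (hXY : X ≠ Y) (hXL : X ∈ L) (hYL : Y ∈ L) (hXM : X ∈ M)
    (hYM : Y ∈ M) : L = M :=
  (hB.2.2 X (hB.subset_erase hL hXL) Y (hB.subset_erase hL hYL) hXY).unique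
    ⟨hL, hXL, hYL⟩ ⟨hM, hXM, hYM⟩

theorem eq_of_mem_added_of_mem_circle (hB : IsDerivedCompletion S n P A B) {ℓ C : Finset α}
    (hℓ : ℓ ∈ B) (hadd : ℓ ∉ derivedLines A P) (hC : C ∈ A) (hPC : P ∈ C) {X Y : α}
    (hXℓ : X ∈ ℓ) (hYℓ : Y ∈ ℓ) (hXC : X ∈ C) (hYC : Y ∈ C) : X = Y := by
  by_contra hXY
  have hXP : X ≠ P := (mem_erase.1 (hB.subset_erase hℓ hXℓ)).1
  have hYP : Y ≠ P := (mem_erase.1 (hB.subset_erase hℓ hYℓ)).1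
  have hCℓ : C.erase P = ℓ := hB.eq_of_mem_of_mem (hB.erase_mem hC hPC) hℓ hXY
    (mem_erase.2 ⟨hXP, hXC⟩) (mem_erase.2 ⟨hYP, hYC⟩) hXℓ hYℓ
  exact hadd (hCℓ ▸ erase_mem_derivedLines hC hPC)

theorem exists_circle_of_simple (hB : IsDerivedCompletion S n P A B) {ℓ : Finset α}
    (hℓ : ℓ ∈ B) (hadd : ℓ ∉ derivedLines A P) {Q : α} (hQ : Q ∈ ℓ)
    (hsimple : (B.filter (fun m => Q ∈ m ∧ m ∉ derivedLines A P)).card = 1) {X : α}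
    (hX : X ∈ S.erase P) (hXℓ : X ∉ ℓ) : ∃ D ∈ A, P ∈ D ∧ Q ∈ D ∧ X ∈ D := by
  obtain ⟨m, hm, hQm, hXm⟩ :=
    hB.exists_mem_mem (hB.subset_erase hℓ hQ) hX (fun h => hXℓ (h ▸ hQ))
  have hmd : m ∈ derivedLines A P := by
    by_contra hmd
    have hmℓ : m = ℓ := card_le_one.1 hsimple.le m (mem_filter.2 ⟨hm, hQm, hmd⟩) ℓ
      (mem_filter.2 ⟨hℓ, hQ, hadd⟩)
    exact hXℓ (hmℓ ▸ hXm)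
  obtain ⟨D, hD, hPD, rfl⟩ := mem_derivedLines.1 hmd
  exact ⟨D, hD, hPD, mem_of_mem_erase hQm, mem_of_mem_erase hXm⟩

theorem insert_erase_mem_of_simple {B' : Finset (Finset α)} {Q : α}
    (hB : IsDerivedCompletion S n P A B) (hB' : IsDerivedCompletion S n Q A B') (hPS : P ∈ S)
    {ℓ : Finset α} (hℓ : ℓ ∈ B) (hadd : ℓ ∉ derivedLines A P) (hQ : Q ∈ ℓ)
    (hsimple : (B.filter (fun m => Q ∈ m ∧ m ∉ derivedLines A P)).card = 1) {R : α}
    (hR : R ∈ ℓ) (hRQ : R ≠ Q) : insert P (ℓ.erase Q) ∈ B' := by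
  have hQP : Q ≠ P := (mem_erase.1 (hB.subset_erase hℓ hQ)).1
  have hPℓ : P ∉ ℓ := fun h => (mem_erase.1 (hB.subset_erase hℓ h)).1 rfl
  have hRS : R ∈ S := (mem_erase.1 (hB.subset_erase hℓ hR)).2
  obtain ⟨μ, hμ, hPμ, hRμ⟩ := hB'.exists_mem_mem (mem_erase.2 ⟨hQP.symm, hPS⟩)
    (mem_erase.2 ⟨hRQ, hRS⟩) (fun h => hPℓ (h ▸ hR))
  have hμadd : μ ∉ derivedLines A Q := by
    intro hμd
    obtain ⟨D, hD, hQD, rfl⟩ := mem_derivedLines.1 hμd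
    exact hRQ (hB.eq_of_mem_added_of_mem_circle hℓ hadd hD (mem_of_mem_erase hPμ) hR hQ
      (mem_of_mem_erase hRμ) hQD)
  have hsub : μ ⊆ insert P (ℓ.erase Q) := by
    intro X hXμ
    rcases eq_or_ne X P with rfl | hXP
    · exact mem_insert_self X _
    obtain ⟨hXQ, hXS⟩ := mem_erase.1 (hB'.subset_erase hμ hXμ)
    refine mem_insert_of_mem (mem_erase.2 ⟨hXQ, ?_⟩)
    by_contra hXℓ
    obtain ⟨D, hD, hPD, hQD, hXD⟩ :=
      hB.exists_circle_of_simple hℓ hadd hQ hsimple (mem_erase.2 ⟨hXP, hXS⟩) hXℓ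
    have hDμ : D.erase Q = μ := hB'.eq_of_mem_of_mem (hB'.erase_mem hD hQD) hμ hXP.symm
      (mem_erase.2 ⟨hQP.symm, hPD⟩) (mem_erase.2 ⟨hXQ, hXD⟩) hPμ hXμ
    exact hμadd (hDμ ▸ erase_mem_derivedLines hD hQD)
  have hcard : (insert P (ℓ.erase Q)).card = μ.card := by
    rw [card_insert_of_notMem (fun h => hPℓ (mem_of_mem_erase h)), card_erase_add_one hQ,
      hB.card_eq hℓ, hB'.card_eq hμ]
  exact eq_of_subset_of_card_le hsub hcard.le ▸ hμ

end IsDerivedCompletion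

end

theorem stmt_16_general {α : Type*} [DecidableEq α] (n : ℕ)
    (S : Finset α) (A : Finset (Finset α))
    (I' : α → Finset (Finset α))
    (hI' : ∀ P ∈ S, IsDerivedCompletion S n P A (I' P) ∧
      ∀ B, IsDerivedCompletion S n P A B → B = I' P)
    (P : α) (hP : P ∈ S)
    (ℓ : Finset α) (hℓ : ℓ ∈ I' P) (hadd : ℓ ∉ derivedLines A P)
    (Q : α) (hQ : Q ∈ ℓ)
    (hsimple : ((I' P).filter (fun m => Q ∈ m ∧ m ∉ derivedLines A P)).card = 1) :
    ∀ R ∈ ℓ, R ≠ Q → ∀ T ∈ ℓ, T ≠ Q → T ≠ R →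
      ∃ m ∈ I' R, m ∉ derivedLines A R ∧ Q ∈ m ∧ T ∈ m := by
  intro R hR hRQ T hT hTQ hTR
  have hB := (hI' P hP).1
  have hQS : Q ∈ S := mem_of_mem_erase (hB.subset_erase hℓ hQ)
  have hBQ := (hI' Q hQS).1
  have hBR := (hI' R (mem_of_mem_erase (hB.subset_erase hℓ hR))).1
  obtain ⟨m, hm, hQm, hTm⟩ := hBR.exists_mem_mem (mem_erase.2 ⟨hRQ.symm, hQS⟩)
    (mem_erase.2 ⟨hTR, mem_of_mem_erase (hB.subset_erase hℓ hT)⟩) hTQ.symm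
  refine ⟨m, hm, fun hmd => ?_, hQm, hTm⟩
  obtain ⟨C, hC, hRC, rfl⟩ := mem_derivedLines.1 hmd
  have hQC := mem_of_mem_erase hQm
  have hTC := mem_of_mem_erase hTm
  have hPC : P ∉ C := fun hPC =>
    hTQ (hB.eq_of_mem_added_of_mem_circle hℓ hadd hC hPC hT hQ hTC hQC)
  have hCQ : C.erase Q = insert P (ℓ.erase Q) :=
    hBQ.eq_of_mem_of_mem (hBQ.erase_mem hC hQC)
      (hB.insert_erase_mem_of_simple hBQ hP hℓ hadd hQ hsimple hR hRQ) hTR.symm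
      (mem_erase.2 ⟨hRQ, hRC⟩) (mem_erase.2 ⟨hTQ, hTC⟩)
      (mem_insert_of_mem (mem_erase.2 ⟨hRQ, hR⟩)) (mem_insert_of_mem (mem_erase.2 ⟨hTQ, hT⟩))
  exact hPC (mem_of_mem_erase (hCQ ▸ mem_insert_self P _))

/-- in a partial 3-(n^d+1, n+1, 1)-design whose derived structures all admit
a unique completion I'_P, if ℓ is an added line of I'_P and Q ∈ ℓ is a simple point of
I'_P, then for every R ∈ ℓ with R ≠ Q, every point of ℓ \ {Q, R} is joined to Q by an
added line in I'_R. -/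
theorem stmt_16 {α : Type*} [DecidableEq α] (n d : ℕ) (hn : 2 ≤ n) (hd : 2 ≤ d)
    (S : Finset α) (A : Finset (Finset α))
    (hS : S.card = n ^ d + 1)
    (hcircles : ∀ C ∈ A, C ⊆ S ∧ C.card = n + 1)
    (hdesign : ∀ P ∈ S, ∀ Q ∈ S, ∀ R ∈ S, P ≠ Q → P ≠ R → Q ≠ R →
      (A.filter (fun C => P ∈ C ∧ Q ∈ C ∧ R ∈ C)).card ≤ 1)
    (I' : α → Finset (Finset α))
    (hI' : ∀ P ∈ S, IsDerivedCompletion S n P A (I' P) ∧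
      ∀ B, IsDerivedCompletion S n P A B → B = I' P)
    (P : α) (hP : P ∈ S)
    (ℓ : Finset α) (hℓ : ℓ ∈ I' P) (hadd : ℓ ∉ derivedLines A P)
    (Q : α) (hQ : Q ∈ ℓ)
    (hsimple : ((I' P).filter (fun m => Q ∈ m ∧ m ∉ derivedLines A P)).card = 1) :
    ∀ R ∈ ℓ, R ≠ Q → ∀ T ∈ ℓ, T ≠ Q → T ≠ R →
      ∃ m ∈ I' R, m ∉ derivedLines A R ∧ Q ∈ m ∧ T ∈ m :=
  stmt_16_general n S A I' hI' P hP ℓ hℓ hadd Q hQ hsimple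
end

section
/- Let d ≥ 3, n ≥ 2 and let (S, A) be a partial 3-(n^d + 1, n + 1, 1)-design. Suppose that for every point P, in the derived structure I_P at most one point has valency less than (n^d − 1)/(n − 1) − 1, and for every line ℓ of I_P and every point Q of I_P not on ℓ there are at most (n^d − 1)/(n − 1) − n lines of I_P through Q disjoint from ℓ. Then (S, A) can be completed to a full 3-(n^d + 1, n + 1, 1)-design. -/
open Finset

section Aux
variable {α : Type*} [DecidableEq α]

/-- The triple `X, Y, Z` is covered by a circle of `A`. -/
def cov (A : Finset (Finset α)) (X Y Z : α) : Prop := ∃ C ∈ A, X ∈ C ∧ Y ∈ C ∧ Z ∈ C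

instance covDec (A : Finset (Finset α)) (X Y Z : α) : Decidable (cov A X Y Z) := by
  unfold cov; infer_instance

lemma cov_p1 {A : Finset (Finset α)} {X Y Z : α} (h : cov A X Y Z) : cov A Y X Z := by
  obtain ⟨C, hC, a, b, c⟩ := h; exact ⟨C, hC, b, a, c⟩

lemma cov_p2 {A : Finset (Finset α)} {X Y Z : α} (h : cov A X Y Z) : cov A X Z Y := by
  obtain ⟨C, hC, a, b, c⟩ := h; exact ⟨C, hC, a, c, b⟩

/-- Points joined to neither `P` nor `Q` (within a circle): the points `Z` such that the
triple `P, Q, Z` is uncovered. -/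
def Tset (S : Finset α) (A : Finset (Finset α)) (P Q : α) : Finset α :=
  S.filter fun Z => Z ≠ P ∧ Z ≠ Q ∧ ¬ cov A P Q Z

lemma mem_Tset {S : Finset α} {A : Finset (Finset α)} {P Q Z : α} :
    Z ∈ Tset S A P Q ↔ Z ∈ S ∧ Z ≠ P ∧ Z ≠ Q ∧ ¬ cov A P Q Z := by
  simp [Tset]

lemma Tset_symm (S : Finset α) (A : Finset (Finset α)) (P Q : α) :
    Tset S A P Q = Tset S A Q P := by
  ext Z
  simp only [Tset, mem_filter]
  constructor
  · rintro ⟨h1, h2, h3, h4⟩; exact ⟨h1, h3, h2, fun h => h4 (cov_p1 h)⟩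
  · rintro ⟨h1, h2, h3, h4⟩; exact ⟨h1, h3, h2, fun h => h4 (cov_p1 h)⟩

/-- The candidate new circle determined by the pair `P, Q`. -/
def Dcirc (S : Finset α) (A : Finset (Finset α)) (P Q : α) : Finset α :=
  insert P (insert Q (Tset S A P Q))

/-- The collection of all candidate new circles. -/
def Dset (n : ℕ) (S : Finset α) (A : Finset (Finset α)) : Finset (Finset α) :=
  ((S ×ˢ S).filter fun p => p.1 ≠ p.2 ∧ (Tset S A p.1 p.2).card = n - 1).image
    fun p => Dcirc S A p.1 p.2

lemma mem_derived {A : Finset (Finset α)} {P : α} {ℓ : Finset α} :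
    ℓ ∈ derivedLines A P ↔ ∃ C, (C ∈ A ∧ P ∈ C) ∧ C.erase P = ℓ := by
  simp [derivedLines]

lemma cov_line {A : Finset (Finset α)} {P X Y : α} (hX : X ≠ P) (hY : Y ≠ P) :
    cov A P X Y ↔ ∃ ℓ ∈ derivedLines A P, X ∈ ℓ ∧ Y ∈ ℓ := by
  constructor
  · rintro ⟨C, hC, hPm, hXm, hYm⟩
    exact ⟨C.erase P, mem_derived.mpr ⟨C, ⟨hC, hPm⟩, rfl⟩,
      mem_erase.mpr ⟨hX, hXm⟩, mem_erase.mpr ⟨hY, hYm⟩⟩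
  · rintro ⟨ℓ, hℓ, hXl, hYl⟩
    obtain ⟨C, ⟨hC, hPC⟩, rfl⟩ := mem_derived.mp hℓ
    exact ⟨C, hC, hPC, mem_of_mem_erase hXl, mem_of_mem_erase hYl⟩

lemma line_unique {S : Finset α} {A : Finset (Finset α)}
    (hdesign : ∀ P ∈ S, ∀ Q ∈ S, ∀ R ∈ S, P ≠ Q → P ≠ R → Q ≠ R →
      (A.filter (fun C => P ∈ C ∧ Q ∈ C ∧ R ∈ C)).card ≤ 1)
    {P X W : α} (hP : P ∈ S) (hXS : X ∈ S) (hWS : W ∈ S)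
    (hXP : X ≠ P) (hWP : W ≠ P) (hXW : X ≠ W)
    {ℓ1 ℓ2 : Finset α} (h1 : ℓ1 ∈ derivedLines A P) (h2 : ℓ2 ∈ derivedLines A P)
    (hX1 : X ∈ ℓ1) (hW1 : W ∈ ℓ1) (hX2 : X ∈ ℓ2) (hW2 : W ∈ ℓ2) : ℓ1 = ℓ2 := by
  obtain ⟨C1, ⟨hC1, hP1⟩, rfl⟩ := mem_derived.mp h1
  obtain ⟨C2, ⟨hC2, hP2⟩, rfl⟩ := mem_derived.mp h2
  by_contra hne
  have hCne : C1 ≠ C2 := fun h => hne (by rw [h])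
  have hsub : ({C1, C2} : Finset (Finset α)) ⊆ A.filter fun C => P ∈ C ∧ X ∈ C ∧ W ∈ C := by
    intro C hC
    rcases mem_insert.mp hC with rfl | hC
    · exact mem_filter.mpr ⟨hC1, hP1, mem_of_mem_erase hX1, mem_of_mem_erase hW1⟩
    · rw [mem_singleton.mp hC]
      exact mem_filter.mpr ⟨hC2, hP2, mem_of_mem_erase hX2, mem_of_mem_erase hW2⟩
  have h2le : 2 ≤ (A.filter fun C => P ∈ C ∧ X ∈ C ∧ W ∈ C).card :=
    le_trans (le_of_eq (card_pair hCne).symm) (card_le_card hsub)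
  have := hdesign P hP X hXS W hWS (Ne.symm hXP) (Ne.symm hWP) hXW
  omega

lemma r_mul (n d : ℕ) : (n - 1) * ((n ^ d - 1) / (n - 1)) = n ^ d - 1 :=
  Nat.mul_div_cancel' (by simpa using Nat.sub_dvd_pow_sub_pow n 1 d)

lemma r_ge {n d : ℕ} (hn : 2 ≤ n) (hd : 3 ≤ d) : n + 2 ≤ (n ^ d - 1) / (n - 1) := by
  rw [Nat.le_div_iff_mul_le (by omega : 0 < n - 1)]
  obtain ⟨m, rfl⟩ : ∃ m, n = m + 2 := ⟨n - 2, by omega⟩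
  have h3 : (m+2)^3 ≤ (m+2)^d := Nat.pow_le_pow_right (by omega) hd
  have e : (m+2)^3 = m*m*m + 6*(m*m) + 12*m + 8 := by ring
  rw [e] at h3
  rw [show m + 2 - 1 = m + 1 by omega, show (m+2+2)*(m+1) = m*m + 5*m + 4 by ring]
  generalize hK : (m+2)^d = K at h3
  set a := m*m with ha
  set b := m*m*m with hb
  omega

lemma count_eq {n d : ℕ} {S : Finset α} {A : Finset (Finset α)} (hn : 2 ≤ n)
    (hS : S.card = n ^ d + 1)
    (hcircles : ∀ C ∈ A, C ⊆ S ∧ C.card = n + 1)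
    (hdesign : ∀ P ∈ S, ∀ Q ∈ S, ∀ R ∈ S, P ≠ Q → P ≠ R → Q ≠ R →
      (A.filter (fun C => P ∈ C ∧ Q ∈ C ∧ R ∈ C)).card ≤ 1)
    {P X : α} (hP : P ∈ S) (hXS : X ∈ S) (hXP : X ≠ P) :
    valency (derivedLines A P) X * (n - 1) + (Tset S A P X).card = n ^ d - 1 := by
  classical
  have hUcard : ((S.erase P).erase X).card = n ^ d - 1 := by
    rw [card_erase_of_mem (mem_erase.mpr ⟨hXP, hXS⟩), card_erase_of_mem hP, hS]; omega
  have hTU : Tset S A P X = ((S.erase P).erase X).filter fun Z => ¬ cov A P X Z := by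
    ext Z
    simp only [Tset, mem_filter, mem_erase]
    tauto
  have hCov : ((S.erase P).erase X).filter (fun Z => cov A P X Z) =
      ((derivedLines A P).filter fun ℓ => X ∈ ℓ).biUnion fun ℓ => ℓ.erase X := by
    ext Z
    simp only [mem_filter, mem_biUnion, mem_erase]
    constructor
    · rintro ⟨⟨hZX, hZP, hZS⟩, C, hC, hPC, hXC, hZC⟩
      exact ⟨C.erase P, ⟨mem_derived.mpr ⟨C, ⟨hC, hPC⟩, rfl⟩, mem_erase.mpr ⟨hXP, hXC⟩⟩,
        hZX, mem_erase.mpr ⟨hZP, hZC⟩⟩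
    · rintro ⟨ℓ, ⟨hℓ, hXℓ⟩, hZX, hZℓ⟩
      obtain ⟨C, ⟨hC, hPC⟩, rfl⟩ := mem_derived.mp hℓ
      exact ⟨⟨hZX, (mem_erase.mp hZℓ).1, (hcircles C hC).1 (mem_of_mem_erase hZℓ)⟩,
        C, hC, hPC, mem_of_mem_erase hXℓ, mem_of_mem_erase hZℓ⟩
  have hdisj : ∀ ℓ1 ∈ (derivedLines A P).filter fun ℓ => X ∈ ℓ,
      ∀ ℓ2 ∈ (derivedLines A P).filter fun ℓ => X ∈ ℓ, ℓ1 ≠ ℓ2 →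
      Disjoint (ℓ1.erase X) (ℓ2.erase X) := by
    intro ℓ1 h1 ℓ2 h2 hne
    obtain ⟨h1D, hX1⟩ := mem_filter.mp h1
    obtain ⟨h2D, hX2⟩ := mem_filter.mp h2
    rw [Finset.disjoint_left]
    intro a ha1 ha2
    obtain ⟨haX, ha1'⟩ := mem_erase.mp ha1
    obtain ⟨_, ha2'⟩ := mem_erase.mp ha2
    obtain ⟨C1, ⟨hC1, hP1⟩, hE1⟩ := mem_derived.mp h1D
    have haP : a ≠ P := by rw [← hE1] at ha1'; exact (mem_erase.mp ha1').1
    have haS : a ∈ S := by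
      rw [← hE1] at ha1'; exact (hcircles C1 hC1).1 (mem_of_mem_erase ha1')
    exact hne (line_unique hdesign hP hXS haS hXP haP (Ne.symm haX) h1D h2D hX1 ha1' hX2 ha2')
  have hcardB := card_biUnion hdisj
  have hsum : ∀ ℓ ∈ (derivedLines A P).filter fun ℓ => X ∈ ℓ, (ℓ.erase X).card = n - 1 := by
    intro ℓ hℓ
    obtain ⟨hℓD, hXℓ⟩ := mem_filter.mp hℓ
    obtain ⟨C, ⟨hC, hPC⟩, rfl⟩ := mem_derived.mp hℓD
    rw [card_erase_of_mem hXℓ, card_erase_of_mem hPC, (hcircles C hC).2]; omega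
  have hCovCard : (((S.erase P).erase X).filter (fun Z => cov A P X Z)).card =
      valency (derivedLines A P) X * (n - 1) := by
    rw [hCov, hcardB, Finset.sum_const_nat hsum]; rfl
  have hsplit := Finset.card_filter_add_card_filter_not
    (s := (S.erase P).erase X) (fun Z => cov A P X Z)
  rw [hCovCard, ← hTU, hUcard] at hsplit
  omega

lemma val_of_card {n d : ℕ} {S : Finset α} {A : Finset (Finset α)} (hn : 2 ≤ n) (hd : 3 ≤ d)
    (hS : S.card = n ^ d + 1)
    (hcircles : ∀ C ∈ A, C ⊆ S ∧ C.card = n + 1)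
    (hdesign : ∀ P ∈ S, ∀ Q ∈ S, ∀ R ∈ S, P ≠ Q → P ≠ R → Q ≠ R →
      (A.filter (fun C => P ∈ C ∧ Q ∈ C ∧ R ∈ C)).card ≤ 1)
    {P Q : α} (hP : P ∈ S) (hQS : Q ∈ S) (hQP : Q ≠ P)
    (hcard : (Tset S A P Q).card = n - 1) :
    valency (derivedLines A P) Q = (n ^ d - 1) / (n - 1) - 1 := by
  have E := count_eq hn hS hcircles hdesign hP hQS hQP
  have hm := r_mul n d
  have hrge := r_ge hn hd
  rw [hcard, ← hm] at E
  -- E : V * (n-1) + (n-1) = (n-1) * R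
  obtain ⟨R', hR'⟩ : ∃ R', (n ^ d - 1) / (n - 1) = R' + 1 := ⟨(n ^ d - 1) / (n - 1) - 1, by omega⟩
  rw [hR'] at E ⊢
  have e2 : (n - 1) * (R' + 1) = R' * (n - 1) + (n - 1) := by ring
  rw [e2] at E
  have hVR : valency (derivedLines A P) Q * (n - 1) = R' * (n - 1) := by omega
  have := Nat.eq_of_mul_eq_mul_right (show 0 < n - 1 by omega) hVR
  omega

lemma card_of_nonlow {n d : ℕ} {S : Finset α} {A : Finset (Finset α)} (hn : 2 ≤ n) (hd : 3 ≤ d)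
    (hS : S.card = n ^ d + 1)
    (hcircles : ∀ C ∈ A, C ⊆ S ∧ C.card = n + 1)
    (hdesign : ∀ P ∈ S, ∀ Q ∈ S, ∀ R ∈ S, P ≠ Q → P ≠ R → Q ≠ R →
      (A.filter (fun C => P ∈ C ∧ Q ∈ C ∧ R ∈ C)).card ≤ 1)
    {P Q : α} (hP : P ∈ S) (hQS : Q ∈ S) (hQP : Q ≠ P)
    (hne : (Tset S A P Q).Nonempty)
    (hnl : ¬ (valency (derivedLines A P) Q < (n ^ d - 1) / (n - 1) - 1)) :
    (Tset S A P Q).card = n - 1 := by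
  have E := count_eq hn hS hcircles hdesign hP hQS hQP
  have hm := r_mul n d
  have hrge := r_ge hn hd
  have ht : 1 ≤ (Tset S A P Q).card := hne.card_pos
  rw [← hm] at E
  obtain ⟨R', hR'⟩ : ∃ R', (n ^ d - 1) / (n - 1) = R' + 1 := ⟨(n ^ d - 1) / (n - 1) - 1, by omega⟩
  rw [hR'] at E hnl
  have e2 : (n - 1) * (R' + 1) = R' * (n - 1) + (n - 1) := by ring
  rw [e2] at E
  -- hnl : ¬ V < R'; so V ≥ R'. If V ≥ R' + 1 then V * (n-1) ≥ (R'+1)*(n-1) too big.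
  have hVge : R' ≤ valency (derivedLines A P) Q := by omega
  rcases Nat.lt_or_ge R' (valency (derivedLines A P) Q) with h | h
  · exfalso
    have h2 : (R' + 1) * (n - 1) ≤ valency (derivedLines A P) Q * (n - 1) :=
      Nat.mul_le_mul_right _ (by omega)
    have e3 : (R' + 1) * (n - 1) = R' * (n - 1) + (n - 1) := by ring
    omega
  · have hV : valency (derivedLines A P) Q = R' := le_antisymm h hVge
    rw [hV] at E
    omega

lemma clique {n d : ℕ} {S : Finset α} {A : Finset (Finset α)} (hn : 2 ≤ n) (hd : 3 ≤ d)
    (hcircles : ∀ C ∈ A, C ⊆ S ∧ C.card = n + 1)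
    (hdesign : ∀ P ∈ S, ∀ Q ∈ S, ∀ R ∈ S, P ≠ Q → P ≠ R → Q ≠ R →
      (A.filter (fun C => P ∈ C ∧ Q ∈ C ∧ R ∈ C)).card ≤ 1)
    (hpar : ∀ P ∈ S, ∀ ℓ ∈ derivedLines A P, ∀ Q ∈ S.erase P, Q ∉ ℓ →
      ((derivedLines A P).filter (fun m => Q ∈ m ∧ m ∩ ℓ = ∅)).card ≤
        (n ^ d - 1) / (n - 1) - n)
    {P X Y Z : α} (hP : P ∈ S) (hXS : X ∈ S)
    (hXP : X ≠ P) (hYP : Y ≠ P) (hZP : Z ≠ P) (hXY : X ≠ Y) (hXZ : X ≠ Z) (hYZ : Y ≠ Z)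
    (hvalX : (n ^ d - 1) / (n - 1) - 1 ≤ valency (derivedLines A P) X)
    (h1 : ¬ cov A P X Y) (h2 : ¬ cov A P X Z) : ¬ cov A P Y Z := by
  classical
  intro hc
  obtain ⟨m, hm, hYm, hZm⟩ := (cov_line hYP hZP).mp hc
  have hXm : X ∉ m := fun hXm => h1 ((cov_line hXP hYP).mpr ⟨m, hm, hXm, hYm⟩)
  obtain ⟨C, ⟨hC, hPC⟩, hCm⟩ := mem_derived.mp hm
  have hmS : m ⊆ S := by rw [← hCm]; exact (erase_subset _ _).trans (hcircles C hC).1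
  have hPm : P ∉ m := by rw [← hCm]; exact notMem_erase _ _
  have hmcard : m.card = n := by
    rw [← hCm, card_erase_of_mem hPC, (hcircles C hC).2]; omega
  have hsplit := Finset.card_filter_add_card_filter_not
    (s := (derivedLines A P).filter fun ℓ => X ∈ ℓ) (fun ℓ => ℓ ∩ m = ∅)
  have hdisjle :
      (((derivedLines A P).filter fun ℓ => X ∈ ℓ).filter fun ℓ => ℓ ∩ m = ∅).card ≤
        (n ^ d - 1) / (n - 1) - n := by
    have hp := hpar P hP m hm X (mem_erase.mpr ⟨hXP, hXS⟩) hXm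
    rw [filter_filter]
    exact hp
  have hmeet :
      (((derivedLines A P).filter fun ℓ => X ∈ ℓ).filter fun ℓ => ¬ (ℓ ∩ m = ∅)).card ≤
        n - 2 := by
    have hcard2 : ((m.erase Y).erase Z).card = n - 2 := by
      rw [card_erase_of_mem (mem_erase.mpr ⟨Ne.symm hYZ, hZm⟩), card_erase_of_mem hYm, hmcard]
      omega
    rw [← hcard2]
    apply card_le_card_of_injOn (fun ℓ => if h : (ℓ ∩ m).Nonempty then h.choose else X)
    · intro ℓ hℓ
      obtain ⟨hℓL, hne⟩ := mem_filter.mp hℓ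
      obtain ⟨hℓD, hXℓ⟩ := mem_filter.mp hℓL
      have hne' : (ℓ ∩ m).Nonempty := nonempty_iff_ne_empty.mpr hne
      beta_reduce
      rw [mem_coe, dif_pos hne']
      obtain ⟨hWl, hWm⟩ := mem_inter.mp hne'.choose_spec
      refine mem_erase.mpr ⟨?_, mem_erase.mpr ⟨?_, hWm⟩⟩
      · rintro rfl; exact h2 ((cov_line hXP hZP).mpr ⟨ℓ, hℓD, hXℓ, hWl⟩)
      · rintro rfl; exact h1 ((cov_line hXP hYP).mpr ⟨ℓ, hℓD, hXℓ, hWl⟩)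
    · intro ℓ1 hℓ1 ℓ2 hℓ2 heq
      obtain ⟨h1L, h1ne⟩ := mem_filter.mp (mem_coe.mp hℓ1)
      obtain ⟨h1D', hX1⟩ := mem_filter.mp h1L
      obtain ⟨h2L, h2ne⟩ := mem_filter.mp (mem_coe.mp hℓ2)
      obtain ⟨h2D', hX2⟩ := mem_filter.mp h2L
      have hne1 : (ℓ1 ∩ m).Nonempty := nonempty_iff_ne_empty.mpr h1ne
      have hne2 : (ℓ2 ∩ m).Nonempty := nonempty_iff_ne_empty.mpr h2ne
      simp only [dif_pos hne1, dif_pos hne2] at heq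
      obtain ⟨hW1l, hW1m⟩ := mem_inter.mp hne1.choose_spec
      obtain ⟨hW2l, hW2m⟩ := mem_inter.mp hne2.choose_spec
      rw [heq] at hW1l hW1m
      have hWP : hne2.choose ≠ P := fun h => hPm (h ▸ hW2m)
      have hWX : X ≠ hne2.choose := fun h => hXm (h ▸ hW2m)
      exact line_unique hdesign hP hXS (hmS hW2m) hXP hWP hWX h1D' h2D' hX1 hW1l hX2 hW2l
  have hval' : valency (derivedLines A P) X =
      ((derivedLines A P).filter fun ℓ => X ∈ ℓ).card := rfl
  have hrge := r_ge hn hd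
  generalize hR : (n ^ d - 1) / (n - 1) = R at hvalX hdisjle hrge
  omega

lemma pair_uncov {n d : ℕ} {S : Finset α} {A : Finset (Finset α)} (hn : 2 ≤ n) (hd : 3 ≤ d)
    (hS : S.card = n ^ d + 1)
    (hcircles : ∀ C ∈ A, C ⊆ S ∧ C.card = n + 1)
    (hdesign : ∀ P ∈ S, ∀ Q ∈ S, ∀ R ∈ S, P ≠ Q → P ≠ R → Q ≠ R →
      (A.filter (fun C => P ∈ C ∧ Q ∈ C ∧ R ∈ C)).card ≤ 1)
    (hpar : ∀ P ∈ S, ∀ ℓ ∈ derivedLines A P, ∀ Q ∈ S.erase P, Q ∉ ℓ →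
      ((derivedLines A P).filter (fun m => Q ∈ m ∧ m ∩ ℓ = ∅)).card ≤
        (n ^ d - 1) / (n - 1) - n)
    {P Q : α} (hP : P ∈ S) (hQ : Q ∈ S) (hPQ : P ≠ Q)
    (hcard : (Tset S A P Q).card = n - 1)
    {Y Z : α} (hY : Y ∈ insert Q (Tset S A P Q)) (hZ : Z ∈ insert Q (Tset S A P Q))
    (hYZ : Y ≠ Z) : ¬ cov A P Y Z := by
  have hvalQ : (n ^ d - 1) / (n - 1) - 1 ≤ valency (derivedLines A P) Q :=
    le_of_eq (val_of_card hn hd hS hcircles hdesign hP hQ (Ne.symm hPQ) hcard).symm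
  rcases mem_insert.mp hY with rfl | hYT
  · rcases mem_insert.mp hZ with rfl | hZT
    · exact absurd rfl hYZ
    · exact (mem_Tset.mp hZT).2.2.2
  · rcases mem_insert.mp hZ with rfl | hZT
    · exact fun hcv => (mem_Tset.mp hYT).2.2.2 (cov_p2 hcv)
    · obtain ⟨hYS, hYP, hYQ, hcovY⟩ := mem_Tset.mp hYT
      obtain ⟨hZS, hZP, hZQ, hcovZ⟩ := mem_Tset.mp hZT
      exact clique hn hd hcircles hdesign hpar hP hQ (Ne.symm hPQ) hYP hZP
        (Ne.symm hYQ) (Ne.symm hZQ) hYZ hvalQ hcovY hcovZ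

lemma triple_uncov {n d : ℕ} {S : Finset α} {A : Finset (Finset α)} (hn : 2 ≤ n) (hd : 3 ≤ d)
    (hS : S.card = n ^ d + 1)
    (hcircles : ∀ C ∈ A, C ⊆ S ∧ C.card = n + 1)
    (hdesign : ∀ P ∈ S, ∀ Q ∈ S, ∀ R ∈ S, P ≠ Q → P ≠ R → Q ≠ R →
      (A.filter (fun C => P ∈ C ∧ Q ∈ C ∧ R ∈ C)).card ≤ 1)
    (hval : ∀ P ∈ S,
      ((S.erase P).filter
        (fun X => valency (derivedLines A P) X < (n ^ d - 1) / (n - 1) - 1)).card ≤ 1)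
    (hpar : ∀ P ∈ S, ∀ ℓ ∈ derivedLines A P, ∀ Q ∈ S.erase P, Q ∉ ℓ →
      ((derivedLines A P).filter (fun m => Q ∈ m ∧ m ∩ ℓ = ∅)).card ≤
        (n ^ d - 1) / (n - 1) - n)
    {P Q : α} (hP : P ∈ S) (hQ : Q ∈ S) (hPQ : P ≠ Q)
    (hcard : (Tset S A P Q).card = n - 1)
    {X Y Z : α} (hX : X ∈ Dcirc S A P Q) (hY : Y ∈ Dcirc S A P Q) (hZ : Z ∈ Dcirc S A P Q)
    (hXY : X ≠ Y) (hXZ : X ≠ Z) (hYZ : Y ≠ Z) : ¬ cov A X Y Z := by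
  have hQP := Ne.symm hPQ
  have hcard' : (Tset S A Q P).card = n - 1 := by rw [← Tset_symm]; exact hcard
  have N1 : ∀ W ∈ Tset S A P Q, ¬ cov A P Q W := fun W hW => (mem_Tset.mp hW).2.2.2
  have N2 : ∀ W ∈ Tset S A P Q, ∀ V ∈ Tset S A P Q, W ≠ V → ¬ cov A P W V :=
    fun W hW V hV hWV => pair_uncov hn hd hS hcircles hdesign hpar hP hQ hPQ hcard
      (mem_insert_of_mem hW) (mem_insert_of_mem hV) hWV
  have N2' : ∀ W ∈ Tset S A P Q, ∀ V ∈ Tset S A P Q, W ≠ V → ¬ cov A Q W V := by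
    intro W hW V hV hWV
    rw [Tset_symm] at hW hV
    exact pair_uncov hn hd hS hcircles hdesign hpar hQ hP hQP hcard'
      (mem_insert_of_mem hW) (mem_insert_of_mem hV) hWV
  have N3 : ∀ W ∈ Tset S A P Q, ∀ V ∈ Tset S A P Q, ∀ U ∈ Tset S A P Q,
      W ≠ V → W ≠ U → V ≠ U → ¬ cov A W V U := by
    intro W hW V hV U hU hWV hWU hVU
    obtain ⟨hWS, hWP, hWQ, _⟩ := mem_Tset.mp hW
    obtain ⟨hVS, hVP, hVQ, _⟩ := mem_Tset.mp hV
    obtain ⟨hUS, hUP, hUQ, _⟩ := mem_Tset.mp hU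
    by_cases hlp : valency (derivedLines A W) P < (n ^ d - 1) / (n - 1) - 1
    · have hlq : ¬ (valency (derivedLines A W) Q < (n ^ d - 1) / (n - 1) - 1) := by
        intro hlq
        have hsub : ({P, Q} : Finset α) ⊆ (S.erase W).filter
            (fun X => valency (derivedLines A W) X < (n ^ d - 1) / (n - 1) - 1) := by
          intro a ha
          rcases mem_insert.mp ha with rfl | ha
          · exact mem_filter.mpr ⟨mem_erase.mpr ⟨Ne.symm hWP, hP⟩, hlp⟩
          · rw [mem_singleton.mp ha]
            exact mem_filter.mpr ⟨mem_erase.mpr ⟨Ne.symm hWQ, hQ⟩, hlq⟩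
        have h2 : 2 ≤ ((S.erase W).filter
            (fun X => valency (derivedLines A W) X < (n ^ d - 1) / (n - 1) - 1)).card :=
          le_trans (le_of_eq (card_pair hPQ).symm) (card_le_card hsub)
        have := hval W hWS
        omega
      exact clique hn hd hcircles hdesign hpar hWS hQ (Ne.symm hWQ) (Ne.symm hWV)
        (Ne.symm hWU) (Ne.symm hVQ) (Ne.symm hUQ) hVU (not_lt.mp hlq)
        (fun h => N2' W hW V hV hWV (cov_p1 h)) (fun h => N2' W hW U hU hWU (cov_p1 h))
    · exact clique hn hd hcircles hdesign hpar hWS hP (Ne.symm hWP) (Ne.symm hWV)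
        (Ne.symm hWU) (Ne.symm hVP) (Ne.symm hUP) hVU (not_lt.mp hlp)
        (fun h => N2 W hW V hV hWV (cov_p1 h)) (fun h => N2 W hW U hU hWU (cov_p1 h))
  have p1 : ∀ {a b c : α}, cov A a b c → cov A b a c := fun h => cov_p1 h
  have p2 : ∀ {a b c : α}, cov A a b c → cov A a c b := fun h => cov_p2 h
  simp only [Dcirc, mem_insert] at hX hY hZ
  rcases hX with rfl | rfl | hX <;> rcases hY with rfl | rfl | hY <;> rcases hZ with rfl | rfl | hZ <;>
    first
      | exact absurd rfl hXY
      | exact absurd rfl hXZ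
      | exact absurd rfl hYZ
      | exact fun h => N1 _ (by assumption) h
      | exact fun h => N1 _ (by assumption) (p1 h)
      | exact fun h => N1 _ (by assumption) (p2 h)
      | exact fun h => N1 _ (by assumption) (p1 (p2 h))
      | exact fun h => N1 _ (by assumption) (p2 (p1 h))
      | exact fun h => N1 _ (by assumption) (p1 (p2 (p1 h)))
      | exact fun h => N2 _ (by assumption) _ (by assumption) (by assumption) h
      | exact fun h => N2 _ (by assumption) _ (by assumption) (by assumption) (p1 h)
      | exact fun h => N2 _ (by assumption) _ (by assumption) (by assumption) (p1 (p2 h))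
      | exact fun h => N2' _ (by assumption) _ (by assumption) (by assumption) h
      | exact fun h => N2' _ (by assumption) _ (by assumption) (by assumption) (p1 h)
      | exact fun h => N2' _ (by assumption) _ (by assumption) (by assumption) (p1 (p2 h))
      | exact fun h => N3 _ (by assumption) _ (by assumption) _ (by assumption)
          (by assumption) (by assumption) (by assumption) h

lemma Dcirc_sub {S : Finset α} {A : Finset (Finset α)} {P Q : α}
    (hP : P ∈ S) (hQ : Q ∈ S) : Dcirc S A P Q ⊆ S :=
  insert_subset hP (insert_subset hQ (filter_subset _ _))

lemma Dcirc_card {n : ℕ} {S : Finset α} {A : Finset (Finset α)} {P Q : α} (hn : 2 ≤ n)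
    (hPQ : P ≠ Q) (hcard : (Tset S A P Q).card = n - 1) :
    (Dcirc S A P Q).card = n + 1 := by
  have hPT : P ∉ Tset S A P Q := fun h => (mem_Tset.mp h).2.1 rfl
  have hQT : Q ∉ Tset S A P Q := fun h => (mem_Tset.mp h).2.2.1 rfl
  rw [Dcirc, card_insert_of_notMem (by simp [hPQ, hPT]), card_insert_of_notMem hQT, hcard]
  omega

lemma main_uncov {n d : ℕ} {S : Finset α} {A : Finset (Finset α)} (hn : 2 ≤ n) (hd : 3 ≤ d)
    (hS : S.card = n ^ d + 1)
    (hcircles : ∀ C ∈ A, C ⊆ S ∧ C.card = n + 1)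
    (hdesign : ∀ P ∈ S, ∀ Q ∈ S, ∀ R ∈ S, P ≠ Q → P ≠ R → Q ≠ R →
      (A.filter (fun C => P ∈ C ∧ Q ∈ C ∧ R ∈ C)).card ≤ 1)
    (hval : ∀ P ∈ S,
      ((S.erase P).filter
        (fun X => valency (derivedLines A P) X < (n ^ d - 1) / (n - 1) - 1)).card ≤ 1)
    (hpar : ∀ P ∈ S, ∀ ℓ ∈ derivedLines A P, ∀ Q ∈ S.erase P, Q ∉ ℓ →
      ((derivedLines A P).filter (fun m => Q ∈ m ∧ m ∩ ℓ = ∅)).card ≤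
        (n ^ d - 1) / (n - 1) - n)
    {P Q R : α} (hP : P ∈ S) (hQ : Q ∈ S) (hR : R ∈ S)
    (hPQ : P ≠ Q) (hPR : P ≠ R) (hQR : Q ≠ R)
    (hcov : ¬ cov A P Q R) (hcard : (Tset S A P Q).card = n - 1) :
    ∃! C, C ∈ A ∪ Dset n S A ∧ P ∈ C ∧ Q ∈ C ∧ R ∈ C := by
  have hRT : R ∈ Tset S A P Q := mem_Tset.mpr ⟨hR, Ne.symm hPR, Ne.symm hQR, hcov⟩
  refine ⟨Dcirc S A P Q, ⟨mem_union_right _ ?_, mem_insert_self _ _,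
    mem_insert_of_mem (mem_insert_self _ _), mem_insert_of_mem (mem_insert_of_mem hRT)⟩, ?_⟩
  · exact mem_image.mpr ⟨(P, Q), mem_filter.mpr ⟨mem_product.mpr ⟨hP, hQ⟩, hPQ, hcard⟩, rfl⟩
  · rintro C' ⟨hC', hPC', hQC', hRC'⟩
    rcases mem_union.mp hC' with hA | hD
    · exact absurd ⟨C', hA, hPC', hQC', hRC'⟩ hcov
    · obtain ⟨⟨X, Y⟩, hXY, rfl⟩ := mem_image.mp hD
      obtain ⟨hprod, hne, hcardXY⟩ := mem_filter.mp hXY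
      obtain ⟨hXS, hYS⟩ := mem_product.mp hprod
      have hsub : Dcirc S A X Y ⊆ Dcirc S A P Q := by
        intro W hW
        by_cases hWP : W = P
        · rw [hWP]; exact mem_insert_self _ _
        by_cases hWQ : W = Q
        · rw [hWQ]; exact mem_insert_of_mem (mem_insert_self _ _)
        have hWS : W ∈ S := Dcirc_sub hXS hYS hW
        have huncov : ¬ cov A P Q W :=
          triple_uncov hn hd hS hcircles hdesign hval hpar hXS hYS hne hcardXY
            hPC' hQC' hW hPQ (fun h => hWP h.symm) (fun h => hWQ h.symm)
        exact mem_insert_of_mem (mem_insert_of_mem (mem_Tset.mpr ⟨hWS, hWP, hWQ, huncov⟩))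
      exact Finset.eq_of_subset_of_card_le hsub
        (by rw [Dcirc_card hn hne hcardXY, Dcirc_card hn hPQ hcard])

end Aux

/-- a partial 3-(n^d+1, n+1, 1)-design (d ≥ 3, n ≥ 2) such that in every
derived structure at most one point has valency less than (n^d−1)/(n−1) − 1 and for every
line ℓ and point Q ∉ ℓ there are at most (n^d−1)/(n−1) − n lines through Q disjoint from
ℓ, can be completed to a full 3-(n^d+1, n+1, 1)-design. -/
theorem stmt_18 {α : Type*} [DecidableEq α] (n d : ℕ) (hn : 2 ≤ n) (hd : 3 ≤ d)
    (S : Finset α) (A : Finset (Finset α))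
    (hS : S.card = n ^ d + 1)
    (hcircles : ∀ C ∈ A, C ⊆ S ∧ C.card = n + 1)
    (hdesign : ∀ P ∈ S, ∀ Q ∈ S, ∀ R ∈ S, P ≠ Q → P ≠ R → Q ≠ R →
      (A.filter (fun C => P ∈ C ∧ Q ∈ C ∧ R ∈ C)).card ≤ 1)
    (hval : ∀ P ∈ S,
      ((S.erase P).filter
        (fun X => valency (derivedLines A P) X < (n ^ d - 1) / (n - 1) - 1)).card ≤ 1)
    (hpar : ∀ P ∈ S, ∀ ℓ ∈ derivedLines A P, ∀ Q ∈ S.erase P, Q ∉ ℓ →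
      ((derivedLines A P).filter (fun m => Q ∈ m ∧ m ∩ ℓ = ∅)).card ≤
        (n ^ d - 1) / (n - 1) - n) :
    ∃ A' : Finset (Finset α), A ⊆ A' ∧ (∀ C ∈ A', C ⊆ S ∧ C.card = n + 1) ∧
      ∀ P ∈ S, ∀ Q ∈ S, ∀ R ∈ S, P ≠ Q → P ≠ R → Q ≠ R →
        ∃! C, C ∈ A' ∧ P ∈ C ∧ Q ∈ C ∧ R ∈ C := by
  refine ⟨A ∪ Dset n S A, subset_union_left, ?_, ?_⟩
  · intro C hC
    rcases mem_union.mp hC with hC | hC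
    · exact hcircles C hC
    · obtain ⟨⟨X, Y⟩, hXY, rfl⟩ := mem_image.mp hC
      obtain ⟨hprod, hne, hcard⟩ := mem_filter.mp hXY
      obtain ⟨hXS, hYS⟩ := mem_product.mp hprod
      exact ⟨Dcirc_sub hXS hYS, Dcirc_card hn hne hcard⟩
  · intro P hP Q hQ R hR hPQ hPR hQR
    by_cases hcov : cov A P Q R
    · obtain ⟨C0, hC0, h1, h2, h3⟩ := hcov
      refine ⟨C0, ⟨mem_union_left _ hC0, h1, h2, h3⟩, ?_⟩
      rintro C' ⟨hC', g1, g2, g3⟩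
      rcases mem_union.mp hC' with hA' | hD'
      · exact Finset.card_le_one.mp (hdesign P hP Q hQ R hR hPQ hPR hQR) C'
          (mem_filter.mpr ⟨hA', g1, g2, g3⟩) C0 (mem_filter.mpr ⟨hC0, h1, h2, h3⟩)
      · obtain ⟨⟨X, Y⟩, hXY, rfl⟩ := mem_image.mp hD'
        obtain ⟨hprod, hne, hcard⟩ := mem_filter.mp hXY
        obtain ⟨hXS, hYS⟩ := mem_product.mp hprod
        exact absurd ⟨C0, hC0, h1, h2, h3⟩
          (triple_uncov hn hd hS hcircles hdesign hval hpar hXS hYS hne hcard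
            g1 g2 g3 hPQ hPR hQR)
    · by_cases hlow : valency (derivedLines A P) Q < (n ^ d - 1) / (n - 1) - 1
      · have hnlR : ¬ (valency (derivedLines A P) R < (n ^ d - 1) / (n - 1) - 1) := by
          intro hlR
          have hsub : ({Q, R} : Finset α) ⊆ (S.erase P).filter
              (fun X => valency (derivedLines A P) X < (n ^ d - 1) / (n - 1) - 1) := by
            intro a ha
            rcases mem_insert.mp ha with rfl | ha
            · exact mem_filter.mpr ⟨mem_erase.mpr ⟨Ne.symm hPQ, hQ⟩, hlow⟩
            · rw [mem_singleton.mp ha]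
              exact mem_filter.mpr ⟨mem_erase.mpr ⟨Ne.symm hPR, hR⟩, hlR⟩
          have h2 : 2 ≤ ((S.erase P).filter
              (fun X => valency (derivedLines A P) X < (n ^ d - 1) / (n - 1) - 1)).card :=
            le_trans (le_of_eq (card_pair hQR).symm) (card_le_card hsub)
          have := hval P hP
          omega
        have hQT : Q ∈ Tset S A P R :=
          mem_Tset.mpr ⟨hQ, Ne.symm hPQ, hQR, fun h => hcov (cov_p2 h)⟩
        have hcardPR : (Tset S A P R).card = n - 1 :=
          card_of_nonlow hn hd hS hcircles hdesign hP hR (Ne.symm hPR) ⟨Q, hQT⟩ hnlR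
        obtain ⟨C, ⟨c0, c1, c2, c3⟩, hu⟩ :=
          main_uncov hn hd hS hcircles hdesign hval hpar hP hR hQ hPR hPQ (Ne.symm hQR)
            (fun h => hcov (cov_p2 h)) hcardPR
        exact ⟨C, ⟨c0, c1, c3, c2⟩, fun C' hm => hu C' ⟨hm.1, hm.2.1, hm.2.2.2, hm.2.2.1⟩⟩
      · have hRT : R ∈ Tset S A P Q := mem_Tset.mpr ⟨hR, Ne.symm hPR, Ne.symm hQR, hcov⟩
        have hcardPQ : (Tset S A P Q).card = n - 1 :=
          card_of_nonlow hn hd hS hcircles hdesign hP hQ (Ne.symm hPQ) ⟨R, hRT⟩ hlow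
        exact main_uncov hn hd hS hcircles hdesign hval hpar hP hQ hR hPQ hPR hQR hcov hcardPQ
end
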